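/- For any tensor t : F^X ⊗ F^Y ⊗ F^Z → F, the flat rank of t is at most the slice rank of t. -/

import Mathlib

/-- `HasSliceRankLE K F r` : the tensor `F` can be written as a sum of `r` slice terms. -/
def HasSliceRankLE {X Y Z : Type*} (K : Type*) [Field K]
    (F : X → Y → Z → K) (r : ℕ) : Prop :=
  ∃ T : Fin r → (X → Y → Z → K),
    (∀ i, (∃ (f : X → K) (g : Y → Z → K), T i = fun x y z => f x * g y z) ∨
          (∃ (f : Y → K) (g : X → Z → K), T i = fun x y z => f y * g x z) ∨
          (∃ (f : Z → K) (g : X → Y → K), T i = fun x y z => f z * g x y)) ∧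
    ∀ x y z, F x y z = ∑ i, T i x y z

/-- The slice rank of a 3-tensor. -/
noncomputable def sliceRank {X Y Z : Type*} (K : Type*) [Field K]
    (F : X → Y → Z → K) : ℕ :=
  sInf {r | HasSliceRankLE K F r}

/-- Contraction of the third factor of a 3-tensor with a vector. -/
noncomputable def contractZ {K : Type*} [Field K] {X Y Z : Type*} [Fintype Z]
    (t : X → Y → Z → K) (v : Z → K) : Matrix X Y K :=
  Matrix.of fun x y => ∑ z, t x y z * v z

/-- `HasFlatRankLE K t ℓ` : there is a subspace `V` of the third factor, of
codimension `c`, with all contractions of `t` against vectors of `V` of matrix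
rank at most `r`, and `r + c ≤ ℓ`. -/
def HasFlatRankLE {X Y Z : Type*} (K : Type*) [Field K]
    [Fintype X] [Fintype Y] [Fintype Z] (t : X → Y → Z → K) (ℓ : ℕ) : Prop :=
  ∃ (V : Submodule K (Z → K)) (r : ℕ),
    (∀ v ∈ V, (contractZ t v).rank ≤ r) ∧
    r + (Fintype.card Z - Module.finrank K V) ≤ ℓ

/-- The flat rank of a 3-tensor. -/
noncomputable def flatRank {X Y Z : Type*} (K : Type*) [Field K]
    [Fintype X] [Fintype Y] [Fintype Z] (t : X → Y → Z → K) : ℕ :=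
  sInf {ℓ | HasFlatRankLE K t ℓ}

/-! Flat rank is subadditive: intersecting the subspaces adds the ranks and at most adds the
codimensions. A slice `f x * g y z` or `f y * g x z` contracts to a rank-one matrix against every
vector, and a slice `f z * g x y` contracts to zero on the hyperplane orthogonal to `f`; so each
slice term has flat rank at most one. -/

open Module

theorem Matrix.rank_add_le {K m n : Type*} [Field K] [Fintype m] [Fintype n]
    (A B : Matrix m n K) : (A + B).rank ≤ A.rank + B.rank := by
  rw [Matrix.rank, Matrix.rank, Matrix.rank, Matrix.mulVecLin_add]
  exact (Submodule.finrank_mono (LinearMap.range_add_le _ _)).trans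
    (Submodule.finrank_add_le_finrank_add_finrank _ _)

theorem Submodule.codim_inf_le {K V : Type*} [Field K] [AddCommGroup V] [Module K V]
    [FiniteDimensional K V] (V₁ V₂ : Submodule K V) :
    finrank K V - finrank K ↥(V₁ ⊓ V₂) ≤
      (finrank K V - finrank K V₁) + (finrank K V - finrank K V₂) := by
  have := Submodule.finrank_sup_add_finrank_inf_eq V₁ V₂
  have := Submodule.finrank_le (V₁ ⊔ V₂)
  omega

section FlatRank

variable {K X Y Z : Type*} [Field K] [Fintype Z]

theorem contractZ_zero (v : Z → K) : contractZ (0 : X → Y → Z → K) v = 0 := by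
  ext x y
  simp [contractZ]

theorem contractZ_add (t₁ t₂ : X → Y → Z → K) (v : Z → K) :
    contractZ (t₁ + t₂) v = contractZ t₁ v + contractZ t₂ v := by
  ext x y
  simp [contractZ, add_mul, Finset.sum_add_distrib]

variable [Fintype X] [Fintype Y]

theorem hasFlatRankLE_zero : HasFlatRankLE K (0 : X → Y → Z → K) 0 :=
  ⟨⊤, 0, fun v _ => by rw [contractZ_zero, Matrix.rank_zero], by simp⟩

theorem HasFlatRankLE.add {t₁ t₂ : X → Y → Z → K} {ℓ₁ ℓ₂ : ℕ}
    (h₁ : HasFlatRankLE K t₁ ℓ₁) (h₂ : HasFlatRankLE K t₂ ℓ₂) :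
    HasFlatRankLE K (t₁ + t₂) (ℓ₁ + ℓ₂) := by
  obtain ⟨V₁, r₁, hr₁, hℓ₁⟩ := h₁
  obtain ⟨V₂, r₂, hr₂, hℓ₂⟩ := h₂
  refine ⟨V₁ ⊓ V₂, r₁ + r₂, fun v hv => ?_, ?_⟩
  · rw [contractZ_add]
    exact (Matrix.rank_add_le _ _).trans (add_le_add (hr₁ v hv.1) (hr₂ v hv.2))
  · have := Submodule.codim_inf_le V₁ V₂
    rw [finrank_fintype_fun_eq_card] at this
    omega

theorem HasFlatRankLE.sum {ι : Type*} (s : Finset ι) {T : ι → X → Y → Z → K} {ℓ : ι → ℕ}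
    (h : ∀ i, HasFlatRankLE K (T i) (ℓ i)) :
    HasFlatRankLE K (∑ i ∈ s, T i) (∑ i ∈ s, ℓ i) :=
  Finset.sum_hom_rel hasFlatRankLE_zero fun i _ _ => (h i).add

theorem hasFlatRankLE_one_of_rank_contractZ_le_one {t : X → Y → Z → K}
    (h : ∀ v, (contractZ t v).rank ≤ 1) : HasFlatRankLE K t 1 :=
  ⟨⊤, 1, fun v _ => h v, by simp⟩

theorem hasFlatRankLE_one_of_contractZ_eq_zero {t : X → Y → Z → K} (φ : (Z → K) →ₗ[K] K)
    (h : ∀ v, φ v = 0 → contractZ t v = 0) : HasFlatRankLE K t 1 := by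
  refine ⟨LinearMap.ker φ, 0, fun v hv => by simp [h v hv], ?_⟩
  have := LinearMap.finrank_range_add_finrank_ker φ
  have := Submodule.finrank_le (LinearMap.range φ)
  simp only [finrank_fintype_fun_eq_card, finrank_self] at *
  omega

theorem hasFlatRankLE_sliceX (f : X → K) (g : Y → Z → K) :
    HasFlatRankLE K (fun x y z => f x * g y z) 1 := by
  refine hasFlatRankLE_one_of_rank_contractZ_le_one fun v => ?_
  convert Matrix.rank_vecMulVec_le f fun y => ∑ z, g y z * v z using 2
  ext x y
  simp [contractZ, Matrix.vecMulVec_apply, Finset.mul_sum, mul_assoc]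

theorem hasFlatRankLE_sliceY (f : Y → K) (g : X → Z → K) :
    HasFlatRankLE K (fun x y z => f y * g x z) 1 := by
  refine hasFlatRankLE_one_of_rank_contractZ_le_one fun v => ?_
  convert Matrix.rank_vecMulVec_le (fun x => ∑ z, g x z * v z) f using 2
  ext x y
  simp only [contractZ, Matrix.of_apply, Matrix.vecMulVec_apply, Finset.sum_mul]
  exact Finset.sum_congr rfl fun z _ => by ring

theorem hasFlatRankLE_sliceZ (f : Z → K) (g : X → Y → K) :
    HasFlatRankLE K (fun x y z => f z * g x y) 1 := by
  refine hasFlatRankLE_one_of_contractZ_eq_zero (dotProductBilin K K f) fun v hv => ?_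
  ext x y
  have hfv : ∑ z, f z * v z = 0 := hv
  simp only [contractZ, Matrix.of_apply, Matrix.zero_apply]
  rw [← mul_zero (g x y), ← hfv, Finset.mul_sum]
  exact Finset.sum_congr rfl fun z _ => by ring

theorem HasSliceRankLE.hasFlatRankLE {t : X → Y → Z → K} {r : ℕ} (h : HasSliceRankLE K t r) :
    HasFlatRankLE K t r := by
  obtain ⟨T, hT, hsum⟩ := h
  have ht : t = ∑ i, T i := by
    ext x y z
    simp [hsum]
  have hterm (i : Fin r) : HasFlatRankLE K (T i) 1 := by
    obtain ⟨f, g, hi⟩ | ⟨f, g, hi⟩ | ⟨f, g, hi⟩ := hT i <;> rw [hi]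
    exacts [hasFlatRankLE_sliceX f g, hasFlatRankLE_sliceY f g, hasFlatRankLE_sliceZ f g]
  simpa [ht] using HasFlatRankLE.sum Finset.univ hterm

end FlatRank

theorem hasSliceRankLE_card {K X Y Z : Type*} [Field K] [Fintype Z] (t : X → Y → Z → K) :
    HasSliceRankLE K t (Fintype.card Z) := by
  classical
  let e := (Fintype.equivFin Z).symm
  refine ⟨fun i x y z => (if z = e i then 1 else 0) * t x y (e i),
    fun i => Or.inr (Or.inr ⟨_, fun x y => t x y (e i), rfl⟩), fun x y z => ?_⟩
  change t x y z = ∑ i, (if z = e i then 1 else 0) * t x y (e i)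
  rw [e.sum_comp fun z' => (if z = z' then 1 else 0) * t x y z']
  simp

/-- The flat rank of a tensor is at most its slice rank. -/
theorem flatRank_le_sliceRank {K : Type*} [Field K]
    {X Y Z : Type*} [Fintype X] [Fintype Y] [Fintype Z] (t : X → Y → Z → K) :
    flatRank K t ≤ sliceRank K t := by
  have hslice : HasSliceRankLE K t (sliceRank K t) :=
    Nat.sInf_mem (s := {r | HasSliceRankLE K t r}) ⟨_, hasSliceRankLE_card t⟩
  exact Nat.sInf_le hslice.hasFlatRankLE
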